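/- arXiv:2308.00202 — 4 statements merged into one kernel-verified Lean document; each statement's English description precedes it below -/
import Mathlib

section
/- For each N, let X_N and Y_N be independent real-valued random variables on a probability space (Ω_N, P_N) (X_N the observed test statistic, Y_N the randomization draw), and suppose that the laws of X_N and the laws of Y_N both converge weakly, as N → ∞, to the same Borel probability measure μ on ℝ whose CDF G(x) = μ((−∞, x]) is continuous. Define the p-value function p_N(x) = P_N(Y_N ≥ x) and the random p-value P_N := p_N(X_N). Then for every α ∈ [0,1], limsup_{N→∞} P_N(P_N ≤ α) ≤ α. -/
/-!
The limit law has no atoms, so for every `c ∈ (α, 1)` there is a threshold `t` with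
`μ (t, ∞) = c`, and `{t}` is a null frontier for both `(t, ∞)` and `[t, ∞)`. By the portmanteau
theorem, `P(Y_N ≥ t) → μ [t, ∞) ≥ c > α` and `P(X_N > t) → c`. Once `p_N(t) > α`, the
antitone function `p_N` can only be `≤ α` to the right of `t`, so
`P(p_N(X_N) ≤ α) ≤ P(X_N > t)` eventually and the limsup is at most `c`.
-/

open MeasureTheory Filter Topology ProbabilityTheory Set

namespace ProbabilityTheory

lemma measure_singleton_eq_zero_of_continuous_cdf {μ : Measure ℝ} [IsProbabilityMeasure μ]
    (h : Continuous (cdf μ)) (x : ℝ) : μ {x} = 0 := by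
  rw [← measure_cdf μ, StieltjesFunction.measure_singleton,
    leftLim_eq_of_tendsto (h.tendsto x |>.mono_left nhdsWithin_le_nhds), sub_self,
    ENNReal.ofReal_zero]

lemma exists_cdf_eq_of_continuous {μ : Measure ℝ} [IsProbabilityMeasure μ]
    (h : Continuous (cdf μ)) {c : ℝ} (hc : c ∈ Ioo 0 1) : ∃ t, cdf μ t = c :=
  mem_range_of_exists_le_of_exists_ge h
    ((tendsto_cdf_atBot μ).eventually (eventually_le_nhds hc.1)).exists
    ((tendsto_cdf_atTop μ).eventually (eventually_ge_nhds hc.2)).exists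

lemma measureReal_Ioi_eq_one_sub_cdf (μ : Measure ℝ) [IsProbabilityMeasure μ] (t : ℝ) :
    μ.real (Ioi t) = 1 - cdf μ t := by
  rw [← compl_Iic, probReal_compl_eq_one_sub measurableSet_Iic, cdf_eq_real]

end ProbabilityTheory

section WeakConvergence

variable {ι : Type*} {L : Filter ι} {Ω : ι → Type*} [∀ i, MeasurableSpace (Ω i)]
  {P : ∀ i, Measure (Ω i)} [∀ i, IsProbabilityMeasure (P i)]
  {E : Type*} [MeasurableSpace E] [TopologicalSpace E] [OpensMeasurableSpace E]
  [HasOuterApproxClosed E] {μ : Measure E} [IsProbabilityMeasure μ] {Z : ∀ i, Ω i → E}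

lemma tendsto_measureReal_preimage_of_tendsto_integral (hZ : ∀ i, Measurable (Z i))
    (hconv : ∀ f : BoundedContinuousFunction E ℝ,
      Tendsto (fun i => ∫ ω, f (Z i ω) ∂(P i)) L (𝓝 (∫ x, f x ∂μ)))
    {s : Set E} (hs : MeasurableSet s) (hs_null : μ (frontier s) = 0) :
    Tendsto (fun i => (P i).real (Z i ⁻¹' s)) L (𝓝 (μ.real s)) := by
  let law : ι → ProbabilityMeasure E :=
    fun i => ⟨(P i).map (Z i), Measure.isProbabilityMeasure_map (hZ i).aemeasurable⟩
  have hlaw : Tendsto law L (𝓝 ⟨μ, ‹_›⟩) := by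
    refine ProbabilityMeasure.tendsto_iff_forall_integral_tendsto.2 fun f => ?_
    simpa only [law, ProbabilityMeasure.coe_mk,
      integral_map (hZ _).aemeasurable f.continuous.aestronglyMeasurable] using hconv f
  have := (ENNReal.tendsto_toReal (measure_ne_top μ s)).comp
    (ProbabilityMeasure.tendsto_measure_of_null_frontier_of_tendsto' hlaw hs_null)
  simpa only [Function.comp_def, law, ProbabilityMeasure.coe_mk, ← measureReal_def,
    map_measureReal_apply (hZ _) hs] using this

end WeakConvergence

section PValue

variable {Ω : Type*} [MeasurableSpace Ω] {β : Type*}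

def pValue [LE β] (P : Measure Ω) (Y : Ω → β) (x : β) : ℝ :=
  P.real {ω | x ≤ Y ω}

lemma antitone_pValue [Preorder β] (P : Measure Ω) [IsFiniteMeasure P] (Y : Ω → β) :
    Antitone (pValue P Y) :=
  fun _ _ hxy => measureReal_mono fun _ hω => hxy.trans hω

lemma setOf_pValue_le_subset_Ioi [LinearOrder β] {P : Measure Ω} [IsFiniteMeasure P]
    {Y : Ω → β} {α : ℝ} {t : β} (ht : α < pValue P Y t) :
    {x | pValue P Y x ≤ α} ⊆ Ioi t :=
  fun _ hx => lt_of_not_ge fun hxt => (ht.trans_le (antitone_pValue P Y hxt)).not_ge hx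

end PValue

lemma limsup_measureReal_pValue_le {β : Type*} [LinearOrder β] {ι : Type*} {L : Filter ι}
    [L.NeBot] {Ω : ι → Type*} [∀ i, MeasurableSpace (Ω i)] {P : ∀ i, Measure (Ω i)}
    [∀ i, IsFiniteMeasure (P i)] {X Y : ∀ i, Ω i → β} {α c : ℝ} {t : β}
    (hY : ∀ᶠ i in L, α < pValue (P i) (Y i) t)
    (hX : Tendsto (fun i => (P i).real (X i ⁻¹' Ioi t)) L (𝓝 c)) :
    limsup (fun i => (P i).real (X i ⁻¹' {x | pValue (P i) (Y i) x ≤ α})) L ≤ c :=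
  calc _ ≤ limsup (fun i => (P i).real (X i ⁻¹' Ioi t)) L :=
        limsup_le_limsup (hY.mono fun _ hi =>
          measureReal_mono (preimage_mono (setOf_pValue_le_subset_Ioi hi)))
          (isCoboundedUnder_le_of_le L fun _ => measureReal_nonneg) hX.isBoundedUnder_le
    _ = c := hX.limsup_eq

theorem stmt_4_general (μ : Measure ℝ) [IsProbabilityMeasure μ]
    (G : ℝ → ℝ) (hG : ∀ x, G x = (μ (Set.Iic x)).toReal) (hGcont : Continuous G)
    {Ω : ℕ → Type*} [∀ N, MeasurableSpace (Ω N)]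
    (P : ∀ N, Measure (Ω N)) [∀ N, IsProbabilityMeasure (P N)]
    (X Y : ∀ N, Ω N → ℝ) (hX : ∀ N, Measurable (X N)) (hY : ∀ N, Measurable (Y N))
    (hconvX : ∀ f : BoundedContinuousFunction ℝ ℝ,
      Tendsto (fun N => ∫ ω, f (X N ω) ∂(P N)) atTop (𝓝 (∫ x, f x ∂μ)))
    (hconvY : ∀ f : BoundedContinuousFunction ℝ ℝ,
      Tendsto (fun N => ∫ ω, f (Y N ω) ∂(P N)) atTop (𝓝 (∫ x, f x ∂μ)))
    (α : ℝ) (hα : α ∈ Set.Icc (0 : ℝ) 1) :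
    limsup (fun N =>
        ((P N) {ω | ((P N) {ω' | X N ω ≤ Y N ω'}).toReal ≤ α}).toReal) atTop ≤ α := by
  change limsup (fun N => (P N).real (X N ⁻¹' {x | pValue (P N) (Y N) x ≤ α})) atTop ≤ α
  have hcdf : Continuous (cdf μ) := by
    convert hGcont using 1
    ext x
    rw [hG, cdf_eq_real, measureReal_def]
  refine le_of_forall_gt_imp_ge_of_dense fun c hαc => ?_
  obtain hc1 | hc1 := le_or_gt 1 c
  · exact (limsup_le_of_le (isCoboundedUnder_le_of_le atTop fun _ => measureReal_nonneg)
      (.of_forall fun _ => measureReal_le_one)).trans hc1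
  obtain ⟨t, ht⟩ :=
    exists_cdf_eq_of_continuous hcdf (c := 1 - c) ⟨by linarith, by linarith [hα.1]⟩
  have hIoi : μ.real (Ioi t) = c := by rw [measureReal_Ioi_eq_one_sub_cdf, ht]; ring
  have hatom := measure_singleton_eq_zero_of_continuous_cdf hcdf t
  have hX_t := tendsto_measureReal_preimage_of_tendsto_integral hX hconvX measurableSet_Ioi
    (by rwa [frontier_Ioi])
  have hY_t := tendsto_measureReal_preimage_of_tendsto_integral hY hconvY measurableSet_Ici
    (by rwa [frontier_Ici])
  refine limsup_measureReal_pValue_le (hY_t.eventually (eventually_gt_nhds ?_)) (hIoi ▸ hX_t)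
  calc α < c := hαc
    _ = μ.real (Ioi t) := hIoi.symm
    _ ≤ μ.real (Ici t) := measureReal_mono Ioi_subset_Ici_self

/-- Asymptotic validity of the randomization p-value: if the observed statistic `X N` and the
(independent) randomization statistic `Y N` both converge in distribution to a common law `μ`
with continuous CDF, then the p-value `P_N(Y_N ≥ X_N)` is asymptotically super-uniform. -/
theorem stmt_4 (μ : Measure ℝ) [IsProbabilityMeasure μ]
    (G : ℝ → ℝ) (hG : ∀ x, G x = (μ (Set.Iic x)).toReal) (hGcont : Continuous G)
    {Ω : ℕ → Type*} [∀ N, MeasurableSpace (Ω N)]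
    (P : ∀ N, Measure (Ω N)) [∀ N, IsProbabilityMeasure (P N)]
    (X Y : ∀ N, Ω N → ℝ) (hX : ∀ N, Measurable (X N)) (hY : ∀ N, Measurable (Y N))
    (hindep : ∀ N, ProbabilityTheory.IndepFun (X N) (Y N) (P N))
    (hconvX : ∀ f : BoundedContinuousFunction ℝ ℝ,
      Tendsto (fun N => ∫ ω, f (X N ω) ∂(P N)) atTop (𝓝 (∫ x, f x ∂μ)))
    (hconvY : ∀ f : BoundedContinuousFunction ℝ ℝ,
      Tendsto (fun N => ∫ ω, f (Y N ω) ∂(P N)) atTop (𝓝 (∫ x, f x ∂μ)))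
    (α : ℝ) (hα : α ∈ Set.Icc (0 : ℝ) 1) :
    limsup (fun N =>
        ((P N) {ω | ((P N) {ω' | X N ω ≤ Y N ω'}).toReal ≤ α}).toReal) atTop ≤ α :=
  stmt_4_general μ G hG hGcont P X Y hX hY hconvX hconvY α hα
end

section
/- Let B be a positive integer and let T_0, T_1, …, T_B be real-valued random variables on a probability space (Ω, 𝒜, P) whose joint law is exchangeable, i.e., invariant under every permutation of the indices {0, 1, …, B}. Define the randomization p-value p := (1 + #{b ∈ {1, …, B} : T_b ≥ T_0}) / (B + 1). Then for every α ∈ [0,1], P(p ≤ α) ≤ α. -/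
/-!
Write `R_i` for the number of `j` with `T_j ≥ T_i`, so that the p-value is `R_0 / (B + 1)`.
For every sample, at most `k` indices satisfy `R_i ≤ k`, since all of them have statistic at least
the smallest one among them. Taking expectations, `∑ᵢ P(R_i ≤ k) ≤ k`, and exchangeability makes
the `B + 1` summands equal, so `P(R_0 ≤ k) ≤ k / (B + 1)`. With `k = ⌊α (B + 1)⌋` this is `≤ α`.
-/

open MeasureTheory Finset

section UpperRank

variable {ι α : Type*} [Fintype ι] [LinearOrder α]

def upperRank (t : ι → α) (i : ι) : ℕ := #{j | t i ≤ t j}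

theorem card_upperRank_le_le (t : ι → α) (k : ℕ) : #{i | upperRank t i ≤ k} ≤ k := by
  obtain hS | ⟨i₀, hi₀, hmin⟩ := ({i | upperRank t i ≤ k} : Finset ι).eq_empty_or_nonempty.imp_right
    fun hS => exists_min_image _ t hS
  · simp [hS]
  calc #{i | upperRank t i ≤ k} ≤ upperRank t i₀ :=
        card_le_card fun j hj => mem_filter.2 ⟨mem_univ j, hmin j hj⟩
    _ ≤ k := (mem_filter.1 hi₀).2

theorem upperRank_comp_perm (t : ι → α) (σ : Equiv.Perm ι) (i : ι) :
    upperRank (t ∘ σ) i = upperRank t (σ i) := by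
  simp only [upperRank, card_filter, Function.comp_apply]
  exact Fintype.sum_equiv σ _ _ fun _ => rfl

theorem upperRank_zero {B : ℕ} (t : Fin (B + 1) → α) :
    upperRank t 0 = 1 + #{b : Fin B | t 0 ≤ t b.succ} := by
  rw [upperRank, card_filter, Fin.sum_univ_succ, if_pos le_rfl, card_filter]

end UpperRank

section Exchangeable

variable {ι α : Type*} [Fintype ι] [LinearOrder α] [TopologicalSpace α] [OrderClosedTopology α]
  [SecondCountableTopology α] [MeasurableSpace α] [OpensMeasurableSpace α]

theorem measurableSet_upperRank_le (i : ι) (k : ℕ) :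
    MeasurableSet {t : ι → α | upperRank t i ≤ k} := by
  have : Measurable fun t : ι → α => upperRank t i := by
    simp only [upperRank, card_filter]
    exact Finset.measurable_sum _ fun j _ => Measurable.ite
      (measurableSet_le (measurable_pi_apply i) (measurable_pi_apply j))
      measurable_const measurable_const
  exact this (measurableSet_le measurable_id measurable_const)

theorem sum_measure_upperRank_le_le (μ : Measure (ι → α)) (k : ℕ) :
    ∑ i, μ {t | upperRank t i ≤ k} ≤ k * μ Set.univ := by
  calc ∑ i, μ {t | upperRank t i ≤ k}
      = ∫⁻ t, ∑ i, {t : ι → α | upperRank t i ≤ k}.indicator 1 t ∂μ := by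
        rw [lintegral_finsetSum _ fun i _ =>
          measurable_one.indicator (measurableSet_upperRank_le i k)]
        simp only [lintegral_indicator_one (measurableSet_upperRank_le _ k)]
    _ ≤ ∫⁻ _, (k : ENNReal) ∂μ := by
        refine lintegral_mono fun t => ?_
        have hcard := card_upperRank_le_le t k
        rw [card_filter] at hcard
        simp only [Set.indicator_apply, Set.mem_ofPred_eq, Pi.one_apply]
        exact_mod_cast hcard
    _ = k * μ Set.univ := lintegral_const _

theorem measure_upperRank_le_eq_of_map_comp_perm {μ : Measure (ι → α)}
    (hμ : ∀ σ : Equiv.Perm ι, μ.map (· ∘ σ) = μ) (i j : ι) (k : ℕ) :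
    μ {t | upperRank t i ≤ k} = μ {t | upperRank t j ≤ k} := by
  classical
  have hσ : Measurable fun t : ι → α => t ∘ Equiv.swap j i :=
    measurable_pi_lambda _ fun l => measurable_pi_apply _
  conv_rhs => rw [← hμ (Equiv.swap j i), Measure.map_apply hσ (measurableSet_upperRank_le j k)]
  simp [Set.preimage, upperRank_comp_perm]

theorem measureReal_upperRank_le_le_of_map_comp_perm {μ : Measure (ι → α)}
    [IsProbabilityMeasure μ] (hμ : ∀ σ : Equiv.Perm ι, μ.map (· ∘ σ) = μ) (i : ι) (k : ℕ) :
    μ.real {t | upperRank t i ≤ k} ≤ k / Fintype.card ι := by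
  have hsum := sum_measure_upperRank_le_le μ k
  simp only [measure_upperRank_le_eq_of_map_comp_perm hμ _ i k, sum_const, card_univ,
    nsmul_eq_mul, measure_univ, mul_one] at hsum
  rw [le_div_iff₀' (by exact_mod_cast Fintype.card_pos_iff.2 ⟨i⟩), measureReal_def]
  simpa using ENNReal.toReal_mono (by simp) hsum

end Exchangeable

theorem stmt_5_general {Ω : Type*} [MeasurableSpace Ω] (P : Measure Ω) [IsProbabilityMeasure P]
    (B : ℕ) (T : Fin (B + 1) → Ω → ℝ) (hT : ∀ i, Measurable (T i))
    (hexch : ∀ σ : Equiv.Perm (Fin (B + 1)),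
      P.map (fun ω => fun i => T (σ i) ω) = P.map (fun ω => fun i => T i ω))
    (α : ℝ) (hα : α ∈ Set.Icc (0 : ℝ) 1) :
    (P {ω | ((1 + ((Finset.univ : Finset (Fin B)).filter
        (fun b => T b.succ ω ≥ T 0 ω)).card : ℝ) / (B + 1)) ≤ α}).toReal ≤ α := by
  set F : Ω → Fin (B + 1) → ℝ := fun ω i => T i ω
  have hF : Measurable F := measurable_pi_lambda _ hT
  have : IsProbabilityMeasure (P.map F) := Measure.isProbabilityMeasure_map hF.aemeasurable
  have hinv (σ : Equiv.Perm (Fin (B + 1))) : (P.map F).map (· ∘ σ) = P.map F := by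
    have hσ : Measurable fun t : Fin (B + 1) → ℝ => t ∘ σ :=
      measurable_pi_lambda _ fun i => measurable_pi_apply (σ i)
    rw [Measure.map_map hσ hF]
    exact hexch σ
  have hαB : 0 ≤ α * (B + 1) := mul_nonneg hα.1 (by positivity)
  set k := ⌊α * (B + 1)⌋₊
  have hevent : {ω | ((1 + (#{b : Fin B | T b.succ ω ≥ T 0 ω}) : ℝ) / (B + 1)) ≤ α}
      = F ⁻¹' {t | upperRank t 0 ≤ k} := by
    ext ω
    simp only [Set.mem_ofPred_eq, Set.mem_preimage, upperRank_zero, F]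
    rw [div_le_iff₀ (by positivity), Nat.le_floor_iff hαB]
    push_cast
    rfl
  rw [← measureReal_def, hevent, ← map_measureReal_apply hF (measurableSet_upperRank_le 0 k)]
  calc _ ≤ (k : ℝ) / Fintype.card (Fin (B + 1)) :=
        measureReal_upperRank_le_le_of_map_comp_perm hinv 0 k
    _ ≤ α := by
        rw [Fintype.card_fin, div_le_iff₀ (by positivity), Nat.cast_add_one]
        exact Nat.floor_le hαB

/-- Finite-sample validity of the Monte Carlo randomization p-value: if the statistics
`T 0, T 1, …, T B` are exchangeable, then the p-value
`p = (1 + #{b ∈ {1,…,B} : T b ≥ T 0}) / (B + 1)` is super-uniform. -/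
theorem stmt_5 {Ω : Type*} [MeasurableSpace Ω] (P : Measure Ω) [IsProbabilityMeasure P]
    (B : ℕ) (hB : 0 < B) (T : Fin (B + 1) → Ω → ℝ) (hT : ∀ i, Measurable (T i))
    (hexch : ∀ σ : Equiv.Perm (Fin (B + 1)),
      P.map (fun ω => fun i => T (σ i) ω) = P.map (fun ω => fun i => T i ω))
    (α : ℝ) (hα : α ∈ Set.Icc (0 : ℝ) 1) :
    (P {ω | ((1 + ((Finset.univ : Finset (Fin B)).filter
        (fun b => T b.succ ω ≥ T 0 ω)).card : ℝ) / (B + 1)) ≤ α}).toReal ≤ α :=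
  stmt_5_general P B T hT hexch α hα
end

section
/- Let m be a positive integer, s : Fin m → ℝ a finite family of real values, and let J be a random index distributed uniformly on Fin m, with T := s(J). Define the p-value function pval(t) := #{j ∈ Fin m : s(j) ≥ t} / m. Then for every α ∈ [0,1], P(pval(T) ≤ α) ≤ α. -/
open MeasureTheory Finset

/- The assignments whose p-value is at most `α` are the top-ranked ones: if `i` has the smallest
statistic among them, they all lie in `{j | s j ≥ s i}`, whose size is `m * pval (s i) ≤ α m`.
Each assignment has probability `1/m`, so the event has probability at most `α`. -/

theorem card_le_of_forall_card_ge_le {ι β : Type*} [Fintype ι] [LinearOrder β] (s : ι → β)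
    (A : Finset ι) {x : ℝ} (hx : 0 ≤ x) (hA : ∀ i ∈ A, (#{j | s i ≤ s j} : ℝ) ≤ x) :
    (#A : ℝ) ≤ x := by
  rcases A.eq_empty_or_nonempty with rfl | hne
  · simpa using hx
  obtain ⟨i, hi, hmin⟩ := A.exists_min_image s hne
  have hsub : A ⊆ ({j | s i ≤ s j} : Finset ι) :=
    fun j hj => mem_filter.2 ⟨mem_univ j, hmin j hj⟩
  calc (#A : ℝ) ≤ #{j | s i ≤ s j} := by exact_mod_cast card_le_card hsub
    _ ≤ x := hA i hi

theorem measure_preimage_finset_le_card_mul {Ω ι : Type*} [MeasurableSpace Ω] (μ : Measure Ω)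
    (f : Ω → ι) (A : Finset ι) {c : ENNReal} (hc : ∀ i, μ {ω | f ω = i} = c) :
    μ (f ⁻¹' A) ≤ #A * c :=
  calc μ (f ⁻¹' A) = μ (⋃ i ∈ A, f ⁻¹' {i}) := by rw [Finset.set_biUnion_preimage_singleton]
    _ ≤ ∑ i ∈ A, μ (f ⁻¹' {i}) := measure_biUnion_finset_le A _
    _ = #A * c := by simp only [Set.preimage, Set.mem_singleton_iff, hc, sum_const, nsmul_eq_mul]

theorem stmt_6_general {Ω : Type*} [MeasurableSpace Ω] (P : Measure Ω)
    (m : ℕ) (hm : 0 < m) (s : Fin m → ℝ)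
    (J : Ω → Fin m)
    (hunif : ∀ j : Fin m, P {ω | J ω = j} = (m : ENNReal)⁻¹)
    (α : ℝ) (hα : α ∈ Set.Icc (0 : ℝ) 1) :
    (P {ω | (((Finset.univ : Finset (Fin m)).filter
        (fun j => s j ≥ s (J ω))).card : ℝ) / m ≤ α}).toReal ≤ α := by
  have hm' : (0 : ℝ) < m := by exact_mod_cast hm
  set A : Finset (Fin m) := {i | (#{j | s j ≥ s i} : ℝ) / m ≤ α}
  have hA : (#A : ℝ) ≤ α * m := card_le_of_forall_card_ge_le s A (mul_nonneg hα.1 hm'.le)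
    fun i hi => (div_le_iff₀ hm').1 (mem_filter.1 hi).2
  have hevent : {ω | (#{j | s j ≥ s (J ω)} : ℝ) / m ≤ α} = J ⁻¹' A := by ext; simp [A]
  rw [hevent]
  have hP : P (J ⁻¹' A) ≤ #A * (m : ENNReal)⁻¹ := measure_preimage_finset_le_card_mul P J A hunif
  calc (P (J ⁻¹' A)).toReal ≤ (#A * (m : ENNReal)⁻¹).toReal :=
        ENNReal.toReal_mono (ENNReal.mul_ne_top (by simp) (by simpa using hm.ne')) hP
    _ = #A / m := by simp [div_eq_mul_inv]
    _ ≤ α := (div_le_iff₀ hm').2 hA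

/-- Exact super-uniformity of the randomization p-value over a finite set of assignments:
if `J` is uniform on `Fin m` and `pval t = #{j : s j ≥ t} / m`, then
`P(pval (s J) ≤ α) ≤ α` for all `α ∈ [0,1]`. -/
theorem stmt_6 {Ω : Type*} [MeasurableSpace Ω] (P : Measure Ω) [IsProbabilityMeasure P]
    (m : ℕ) (hm : 0 < m) (s : Fin m → ℝ)
    (J : Ω → Fin m) (hJ : Measurable J)
    (hunif : ∀ j : Fin m, P {ω | J ω = j} = (m : ENNReal)⁻¹)
    (α : ℝ) (hα : α ∈ Set.Icc (0 : ℝ) 1) :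
    (P {ω | (((Finset.univ : Finset (Fin m)).filter
        (fun j => s j ≥ s (J ω))).card : ℝ) / m ≤ α}).toReal ≤ α :=
  stmt_6_general P m hm s J hunif α hα
end

section
/- Let (Ω, 𝒜, P) be a probability space, γ ∈ [0,1], E ∈ 𝒜 an event with P(Eᶜ) ≤ γ, and let X, Y be real-valued random variables such that: (a) X ≥ 0 almost surely; (b) P(X ≤ t) ≤ t for every t ∈ [0,1]; (c) Y ≥ γ almost surely; and (d) Y(ω) ≥ X(ω) + γ for every ω ∈ E. Then for every α ∈ [0,1], P(Y ≤ α) ≤ α. -/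
open MeasureTheory

/-!
Below `γ` the event `{Y ≤ α}` is null, since `Y ≥ γ` almost surely. Otherwise `{Y ≤ α}` is covered
by `{X ≤ α - γ}`, of probability at most `α - γ` by super-uniformity, and by `Eᶜ`, of probability
at most `γ`.
-/

section BergerBoos

variable {Ω : Type*} {E : Set Ω} {X Y : Ω → ℝ} {γ α : ℝ}

lemma setOf_le_subset_union_compl (hXY : ∀ ω ∈ E, X ω + γ ≤ Y ω) (α : ℝ) :
    {ω | Y ω ≤ α} ⊆ {ω | X ω ≤ α - γ} ∪ Eᶜ := by
  intro ω (hω : Y ω ≤ α)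
  by_cases hωE : ω ∈ E
  · left
    show X ω ≤ α - γ
    linarith [hXY ω hωE]
  · exact Or.inr hωE

variable [MeasurableSpace Ω] {P : Measure Ω}

lemma measure_setOf_le_eq_zero_of_ae_le (hY : ∀ᵐ ω ∂P, γ ≤ Y ω) (hα : α < γ) :
    P {ω | Y ω ≤ α} = 0 :=
  measure_mono_null (fun ω (hω : Y ω ≤ α) (hγ : γ ≤ Y ω) => (hω.trans_lt hα).not_ge hγ) hY

lemma measureReal_setOf_le_le_add [IsFiniteMeasure P] (hXY : ∀ ω ∈ E, X ω + γ ≤ Y ω) (α : ℝ) :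
    P.real {ω | Y ω ≤ α} ≤ P.real {ω | X ω ≤ α - γ} + P.real Eᶜ :=
  (measureReal_mono (setOf_le_subset_union_compl hXY α)).trans (measureReal_union_le _ _)

end BergerBoos

theorem stmt_7_general {Ω : Type*} [MeasurableSpace Ω] (P : Measure Ω) [IsProbabilityMeasure P]
    (γ : ℝ) (hγ : γ ∈ Set.Icc (0 : ℝ) 1)
    (E : Set Ω) (hEc : (P Eᶜ).toReal ≤ γ)
    (X Y : Ω → ℝ)
    (hb : ∀ t ∈ Set.Icc (0 : ℝ) 1, (P {ω | X ω ≤ t}).toReal ≤ t)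
    (hc : ∀ᵐ ω ∂P, γ ≤ Y ω)
    (hd : ∀ ω ∈ E, X ω + γ ≤ Y ω)
    (α : ℝ) (hα : α ∈ Set.Icc (0 : ℝ) 1) :
    (P {ω | Y ω ≤ α}).toReal ≤ α := by
  obtain ⟨hα0, hα1⟩ := hα
  rcases lt_or_ge α γ with hαγ | hγα
  · simpa [measure_setOf_le_eq_zero_of_ae_le hc hαγ] using hα0
  · have hX := hb (α - γ) ⟨by linarith, by linarith [hγ.1]⟩
    calc P.real {ω | Y ω ≤ α} ≤ P.real {ω | X ω ≤ α - γ} + P.real Eᶜ :=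
          measureReal_setOf_le_le_add hd α
      _ ≤ (α - γ) + γ := add_le_add hX hEc
      _ = α := by ring

/-- Berger–Boos type inequality: if `X` is super-uniform, `Y ≥ γ` a.s., `Y ≥ X + γ` on an
event `E` with `P(Eᶜ) ≤ γ`, then `Y` is super-uniform: `P(Y ≤ α) ≤ α` for `α ∈ [0,1]`. -/
theorem stmt_7 {Ω : Type*} [MeasurableSpace Ω] (P : Measure Ω) [IsProbabilityMeasure P]
    (γ : ℝ) (hγ : γ ∈ Set.Icc (0 : ℝ) 1)
    (E : Set Ω) (hE : MeasurableSet E) (hEc : (P Eᶜ).toReal ≤ γ)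
    (X Y : Ω → ℝ) (hXm : Measurable X) (hYm : Measurable Y)
    (ha : ∀ᵐ ω ∂P, 0 ≤ X ω)
    (hb : ∀ t ∈ Set.Icc (0 : ℝ) 1, (P {ω | X ω ≤ t}).toReal ≤ t)
    (hc : ∀ᵐ ω ∂P, γ ≤ Y ω)
    (hd : ∀ ω ∈ E, X ω + γ ≤ Y ω)
    (α : ℝ) (hα : α ∈ Set.Icc (0 : ℝ) 1) :
    (P {ω | Y ω ≤ α}).toReal ≤ α :=
  stmt_7_general P γ hγ E hEc X Y hb hc hd α hα
end
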